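/- For a partition λ with at most n parts, the Schur polynomial satisfies the bialternant formula: s_λ(x_1,...,x_n) = det(x_i^{λ_j + n - j})_{1≤i,j≤n} / ∏_{1≤i<j≤n} (x_i - x_j). -/

import Mathlib

/-- The Schur polynomial `s_λ(x₁,...,xₙ)`, defined as the generating function over
semistandard Young tableaux of shape `λ` (given as a weakly decreasing sequence of
row lengths) with entries in `{1,...,n}`: cells are pairs `⟨i, j⟩` with `j < λ i`,
rows are weakly increasing and columns strictly increasing, and each tableau `T`
contributes `∏ₐ xₐ^{#{cells of T with entry a}}`. -/
def schur {K : Type*} [CommRing K] {n : ℕ} (lam : Fin n → ℕ) (x : Fin n → K) : K :=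
  ∑ T ∈ Finset.univ.filter
      (fun T : ((i : Fin n) × Fin (lam i)) → Fin n =>
        (∀ (i : Fin n) (j j' : Fin (lam i)), (j : ℕ) ≤ (j' : ℕ) → T ⟨i, j⟩ ≤ T ⟨i, j'⟩) ∧
        (∀ (i i' : Fin n) (j : Fin (lam i)) (j' : Fin (lam i')),
          i < i' → (j : ℕ) = (j' : ℕ) → T ⟨i, j⟩ < T ⟨i', j'⟩)),
    ∏ a : Fin n, x a ^ (Finset.univ.filter (fun c => T c = a)).card

open Finset

section aux

variable {K : Type*} [CommRing K]

/-- Product of `x i - x j` over pairs `i < j`. -/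
def vprod {n : ℕ} (x : Fin n → K) : K :=
  ∏ p ∈ Finset.univ.filter (fun p : Fin n × Fin n => p.1 < p.2), (x p.1 - x p.2)

/-- The alternant determinant. -/
def altdet {n : ℕ} (lam : Fin n → ℕ) (x : Fin n → K) : K :=
  Matrix.det (fun i j : Fin n => x i ^ (lam j + (n - 1 - (j : ℕ))))

lemma geom_tele (y z : K) (c : ℕ) {a b : ℕ} (hab : a ≤ b) :
    (y - z) * ∑ m ∈ Finset.Icc a b, z ^ (b - m) * y ^ (m + c)
      = y ^ (b + c + 1) - z ^ (b - a + 1) * y ^ (a + c) := by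
  induction b, hab using Nat.le_induction with
  | base => simp; ring
  | succ b hb ih =>
      rw [Finset.sum_Icc_succ_top (by omega)]
      have h1 : ∀ m ∈ Finset.Icc a b, z ^ (b + 1 - m) * y ^ (m + c)
          = z * (z ^ (b - m) * y ^ (m + c)) := by
        intro m hm
        rw [Finset.mem_Icc] at hm
        have : b + 1 - m = (b - m) + 1 := by omega
        rw [this, pow_succ]; ring
      rw [Finset.sum_congr rfl h1, ← Finset.mul_sum]
      have h2 : b + 1 - a + 1 = (b - a + 1) + 1 := by omega
      rw [h2]
      simp only [Nat.sub_self, pow_zero, one_mul]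
      have h3 : b + 1 + c = b + c + 1 := by omega
      rw [h3]
      linear_combination z * ih

lemma prodt (L : ℕ → ℕ) (hL : ∀ i, L (i + 1) ≤ L i) (z : K) {k m : ℕ} (hkm : k ≤ m) :
    ∏ j ∈ Finset.Ico k m, (-(z ^ (L j - L (j + 1) + 1)))
      = (-1) ^ (m - k) * z ^ (L k - L m + (m - k)) := by
  have hA : Antitone L := antitone_nat_of_succ_le hL
  induction m, hkm using Nat.le_induction with
  | base => simp
  | succ m hm ih =>
      rw [Finset.prod_Ico_succ_top hm, ih]
      have h1 : m + 1 - k = (m - k) + 1 := by omega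
      have h2 : L k - L (m + 1) + (m - k + 1)
          = (L k - L m + (m - k)) + (L m - L (m + 1) + 1) := by
        have := hA hm; have := hL m; omega
      rw [h1, h2, pow_add, pow_succ]
      ring

lemma vprod_eq {n : ℕ} (x : Fin n → K) :
    vprod x = ∏ i : Fin n, ∏ j ∈ Finset.Ioi i, (x i - x j) := by
  rw [vprod, Finset.prod_sigma']
  apply Finset.prod_nbij' (fun p => (⟨p.1, p.2⟩ : (_ : Fin n) × Fin n))
    (fun p => (p.1, p.2)) <;>
    simp [Finset.mem_sigma, Finset.mem_filter]

lemma Ioi_castSucc_eq {n : ℕ} (i : Fin n) :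
    (Finset.Ioi (Fin.castSucc i) : Finset (Fin (n+1)))
      = insert (Fin.last n) ((Finset.Ioi i).map Fin.castSuccEmb) := by
  ext j
  simp only [Finset.mem_Ioi, Finset.mem_insert, Finset.mem_map, Fin.castSuccEmb,
    Function.Embedding.coeFn_mk]
  constructor
  · intro hj
    rcases eq_or_lt_of_le (Fin.le_last j) with h | h
    · exact Or.inl h
    · refine Or.inr ⟨⟨j.val, by simpa [Fin.lt_iff_val_lt_val] using h⟩, ?_, ?_⟩
      · simpa [Fin.lt_iff_val_lt_val] using hj
      · exact Fin.ext rfl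
  · rintro (rfl | ⟨j', hj', rfl⟩)
    · exact Fin.castSucc_lt_last i
    · exact Fin.castSucc_lt_castSucc_iff.mpr hj'

lemma vprod_succ {n : ℕ} (x : Fin (n+1) → K) :
    vprod x = vprod (x ∘ Fin.castSucc) * ∏ i : Fin n, (x (Fin.castSucc i) - x (Fin.last n)) := by
  rw [vprod_eq, vprod_eq, Fin.prod_univ_castSucc]
  have hlast : (Finset.Ioi (Fin.last n) : Finset (Fin (n+1))) = ∅ := by
    ext j; simp [Fin.lt_iff_val_lt_val, Fin.last]
    omega
  rw [hlast]
  simp only [Finset.prod_empty, mul_one]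
  rw [← Finset.prod_mul_distrib]
  apply Finset.prod_congr rfl
  intro i _
  rw [Ioi_castSucc_eq, Finset.prod_insert (by
    simp only [Finset.mem_map, Fin.castSuccEmb, Function.Embedding.coeFn_mk]
    rintro ⟨j, -, hj⟩
    exact absurd hj (Fin.castSucc_lt_last j).ne), Finset.prod_map]
  simp only [Fin.castSuccEmb, Function.Embedding.coeFn_mk]
  exact mul_comm _ _


section aux
variable {K : Type*} [CommRing K]

-- adjacent flip lemma
lemma exists_flip {P : ℕ → Bool} : ∀ {a b : ℕ}, a < b → P a = false → P b = true →
    ∃ m, a ≤ m ∧ m + 1 ≤ b ∧ P m = false ∧ P (m + 1) = true := by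
  intro a b
  induction b with
  | zero => omega
  | succ b ih =>
    intro hab hPa hPb
    rcases Nat.lt_or_ge a b with h | h
    · cases hPb' : P b with
      | true =>
          obtain ⟨m, h1, h2, h3, h4⟩ := ih h hPa hPb'
          exact ⟨m, h1, by omega, h3, h4⟩
      | false => exact ⟨b, by omega, le_rfl, hPb', hPb⟩
    · have : a = b := by omega
      subst this
      exact ⟨a, le_rfl, le_rfl, hPa, hPb⟩

example (n : ℕ) (lam : Fin (n+1) → ℕ) (x : Fin (n+1) → K) :
    altdet lam x = Matrix.det (fun i j : Fin (n+1) => x i ^ (lam j + (n - (j : ℕ)))) := rfl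

example (n : ℕ) (M : Matrix (Fin n) (Fin n) K) : M.det = Matrix.detRowAlternating M := rfl

end aux
lemma lower_card {m : ℕ} (S : Finset (Fin m))
    (hS : ∀ j j' : Fin m, j ≤ j' → j' ∈ S → j ∈ S) (j : Fin m) :
    j ∈ S ↔ (j : ℕ) < S.card := by
  constructor
  · intro hj
    have hsub : Finset.Iic j ⊆ S := fun k hk => hS k j (Finset.mem_Iic.mp hk) hj
    have := Finset.card_le_card hsub
    rw [Fin.card_Iic] at this
    omega
  · intro hj
    by_contra hjS
    have hsub : S ⊆ Finset.Iio j := by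
      intro k hk
      rw [Finset.mem_Iio]
      by_contra hk2
      exact hjS (hS j k (Fin.not_lt.mp hk2) hk)
    have := Finset.card_le_card hsub
    rw [Fin.card_Iio] at this
    omega
lemma tau_sel {n : ℕ} (k : Fin (n+1)) (j : Fin n) :
    (bif decide ((j:ℕ) < (k:ℕ)) then Fin.castSucc j else j.succ) = k.succAbove j := by
  rw [Fin.succAbove]
  by_cases h : (j : ℕ) < (k : ℕ)
  · simp [h, Fin.lt_def]
  · simp [h, Fin.lt_def]

lemma alt_branch {n : ℕ} (lam : Fin (n+1) → ℕ) (hlam : Antitone lam) (x : Fin (n+1) → K) :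
    altdet lam x
      = (∏ i : Fin n, (x (Fin.castSucc i) - x (Fin.last n))) *
        ∑ ν ∈ Fintype.piFinset (fun i : Fin n => Finset.Icc (lam i.succ) (lam i.castSucc)),
          x (Fin.last n) ^ ((∑ i, lam i) - ∑ i, ν i) * altdet ν (x ∘ Fin.castSucc) := by
  classical
  set z := x (Fin.last n) with hzdef
  set y : Fin n → K := x ∘ Fin.castSucc with hydef
  set f : (Fin n → K) [⋀^Fin n]→ₗ[K] K := Matrix.detRowAlternating with hfdef
  set E : Fin (n+1) → ℕ := fun k => lam k + (n - (k : ℕ)) with hEdef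
  set colA : Fin (n+1) → (Fin n → K) := fun k i => y i ^ E k with hcolAdef
  set g : (j : Fin n) → ℕ → (Fin n → K) :=
    fun j m => z ^ (lam j.castSucc - m) • fun i => y i ^ (m + (n - 1 - (j : ℕ))) with hgdef
  -- Step 1 : rewrite each summand of the RHS sum
  have step1 : ∀ ν ∈ Fintype.piFinset (fun i : Fin n => Finset.Icc (lam i.succ) (lam i.castSucc)),
      z ^ ((∑ i, lam i) - ∑ i, ν i) * altdet ν y
        = z ^ lam (Fin.last n) * f (fun j => g j (ν j)) := by
    intro ν hν
    rw [Fintype.mem_piFinset] at hν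
    have hub : ∀ j : Fin n, ν j ≤ lam j.castSucc := fun j => (Finset.mem_Icc.mp (hν j)).2
    have hsum : (∑ i, lam i) - ∑ i, ν i
        = lam (Fin.last n) + ∑ j : Fin n, (lam j.castSucc - ν j) := by
      rw [Fin.sum_univ_castSucc (f := lam)]
      have h1 : ∑ j : Fin n, (lam j.castSucc - ν j)
          = ∑ j : Fin n, lam j.castSucc - ∑ j : Fin n, ν j :=
        Finset.sum_tsub_distrib Finset.univ (fun j _ => hub j)
      have h2 : ∑ j : Fin n, ν j ≤ ∑ j : Fin n, lam j.castSucc :=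
        Finset.sum_le_sum (fun j _ => hub j)
      omega
    have hdet : altdet ν y = f (fun j => fun i => y i ^ (ν j + (n - 1 - (j : ℕ)))) := by
      rw [altdet]
      exact (Matrix.det_transpose (Matrix.of fun i j : Fin n => y i ^ (ν j + (n - 1 - (j : ℕ))))).symm
    rw [hdet, hsum, pow_add, ← Finset.prod_pow_eq_pow_sum, mul_assoc]
    congr 1
    have hsm := f.toMultilinearMap.map_smul_univ (fun j => z ^ (lam j.castSucc - ν j))
      (fun j => fun i => y i ^ (ν j + (n - 1 - (j : ℕ))))
    rw [AlternatingMap.coe_multilinearMap, smul_eq_mul] at hsm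
    rw [← hsm]
  rw [Finset.sum_congr rfl step1, ← Finset.mul_sum]
  -- Step 2 : push the sum inside f
  have step2 : (∑ ν ∈ Fintype.piFinset (fun i : Fin n => Finset.Icc (lam i.succ) (lam i.castSucc)),
        f (fun j => g j (ν j)))
      = f (fun j => ∑ m ∈ Finset.Icc (lam j.succ) (lam j.castSucc), g j m) := by
    have := f.toMultilinearMap.map_sum_finset g
      (fun i : Fin n => Finset.Icc (lam i.succ) (lam i.castSucc))
    rw [AlternatingMap.coe_multilinearMap] at this
    exact this.symm
  rw [step2]
  set t : Fin n → K := fun j => z ^ (lam j.castSucc - lam j.succ + 1) with htdef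
  -- Step 3/4 : pull the row scaling inside and telescope each entry
  have step34 : (∏ i : Fin n, (x (Fin.castSucc i) - z)) *
        (f (fun j => ∑ m ∈ Finset.Icc (lam j.succ) (lam j.castSucc), g j m))
      = f (fun j => colA j.castSucc - t j • colA j.succ) := by
    have h1 : (∏ i : Fin n, (x (Fin.castSucc i) - z)) *
          (f (fun j => ∑ m ∈ Finset.Icc (lam j.succ) (lam j.castSucc), g j m))
        = Matrix.det (Matrix.of fun (j i : Fin n) =>
            (y i - z) * (∑ m ∈ Finset.Icc (lam j.succ) (lam j.castSucc), g j m) i) :=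
      (Matrix.det_mul_row (fun i => y i - z) _).symm
    rw [h1]
    congr 1
    funext j i
    simp only [Matrix.of_apply, Finset.sum_apply, hgdef, Pi.smul_apply, smul_eq_mul]
    rw [geom_tele (y i) z (n - 1 - (j : ℕ)) (hlam (Fin.castSucc_le_succ j))]
    have e1 : lam j.castSucc + (n - 1 - (j : ℕ)) + 1 = E j.castSucc := by
      have := j.isLt
      simp only [hEdef, Fin.coe_castSucc]
      omega
    have e2 : lam j.succ + (n - 1 - (j : ℕ)) = E j.succ := by
      have := j.isLt
      simp only [hEdef, Fin.val_succ]
      omega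
    rw [e1, e2]
    simp only [hcolAdef, Pi.sub_apply, Pi.smul_apply, smul_eq_mul, htdef, hydef]
  rw [mul_comm (z ^ lam (Fin.last n)), ← mul_assoc, step34]
  -- Step 5 : expand rows as sums over Bool
  set hh : (j : Fin n) → Bool → (Fin n → K) :=
    fun j b => bif b then colA j.castSucc else (-(t j)) • colA j.succ with hhdef
  have row_eq : (fun j => colA j.castSucc - t j • colA j.succ) = fun j => ∑ b : Bool, hh j b := by
    funext j
    rw [Fintype.sum_bool]
    simp only [hhdef, cond_true, cond_false, neg_smul]
    rw [sub_eq_add_neg]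
  rw [row_eq]
  have step5 : f (fun j => ∑ b : Bool, hh j b)
      = ∑ ε ∈ Fintype.piFinset (fun _ : Fin n => (Finset.univ : Finset Bool)),
          f (fun j => hh j (ε j)) := by
    have := f.toMultilinearMap.map_sum_finset hh (fun _ => Finset.univ)
    rw [AlternatingMap.coe_multilinearMap] at this
    exact this
  rw [step5, Fintype.piFinset_univ]
  -- Step 6 : extract scalars
  have step6 : ∀ ε : Fin n → Bool, f (fun j => hh j (ε j))
      = (∏ j, bif ε j then (1 : K) else -(t j)) *
          f (fun j => colA (bif ε j then j.castSucc else j.succ)) := by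
    intro ε
    have hsm := f.toMultilinearMap.map_smul_univ (fun j => bif ε j then (1 : K) else -(t j))
      (fun j => colA (bif ε j then j.castSucc else j.succ))
    rw [AlternatingMap.coe_multilinearMap, smul_eq_mul] at hsm
    rw [← hsm]
    congr 1
    funext j
    cases hε : ε j <;> simp [hhdef, hε]
  rw [Finset.sum_congr rfl (fun ε _ => step6 ε)]
  -- Step 7 : only threshold choices survive
  set τ : Fin (n+1) → (Fin n → Bool) := fun k j => decide ((j : ℕ) < (k : ℕ)) with hτdef
  have himage : (∑ ε : Fin n → Bool, (∏ j, bif ε j then (1 : K) else -(t j)) *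
        f (fun j => colA (bif ε j then j.castSucc else j.succ)))
      = ∑ k : Fin (n+1), (∏ j, bif τ k j then (1 : K) else -(t j)) *
          f (fun j => colA (bif τ k j then j.castSucc else j.succ)) := by
    have h0 : ∀ ε ∈ (Finset.univ : Finset (Fin n → Bool)), ε ∉ Finset.image τ Finset.univ →
        (∏ j, bif ε j then (1 : K) else -(t j)) *
          f (fun j => colA (bif ε j then j.castSucc else j.succ)) = 0 := by
      intro ε _ hε
      by_cases hdc : ∀ (j j' : Fin n), j ≤ j' → ε j' = true → ε j = true
      · exfalso
        apply hε
        have hS := lower_card (Finset.univ.filter (fun j => ε j = true))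
          (fun j j' hle hj' => Finset.mem_filter.mpr
            ⟨Finset.mem_univ _, hdc j j' hle (Finset.mem_filter.mp hj').2⟩)
        refine Finset.mem_image.mpr ⟨⟨#(Finset.univ.filter fun j => ε j = true),
          Nat.lt_succ_of_le (le_trans (Finset.card_filter_le _ _) (by simp))⟩,
          Finset.mem_univ _, ?_⟩
        funext j
        rw [hτdef]
        cases hεj : ε j with
        | true =>
            have := (hS j).mp (Finset.mem_filter.mpr ⟨Finset.mem_univ _, hεj⟩)
            simpa using this
        | false =>
            have : j ∉ Finset.univ.filter (fun j => ε j = true) := by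
              simp [hεj]
            rw [hS j] at this
            simpa using this
      · push_neg at hdc
        obtain ⟨j, j', hle, hj', hjf⟩ := hdc
        have hjf' : ε j = false := by simpa using hjf
        have hlt : (j : ℕ) < (j' : ℕ) := by
          rcases lt_or_eq_of_le hle with h | h
          · exact h
          · rw [h] at hjf'; rw [hjf'] at hj'; exact absurd hj' (by simp)
        obtain ⟨m, hm1, hm2, hm3, hm4⟩ := exists_flip
          (P := fun m => if h : m < n then ε ⟨m, h⟩ else true) hlt
          (by simp [j.isLt, hjf'])
          (by simp [j'.isLt, hj'])
        have hmn : m + 1 < n := lt_of_le_of_lt hm2 j'.isLt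
        have hm3' : ε ⟨m, by omega⟩ = false := by simpa [show m < n by omega] using hm3
        have hm4' : ε ⟨m + 1, hmn⟩ = true := by simpa [hmn] using hm4
        have hzero : f (fun j => colA (bif ε j then j.castSucc else j.succ)) = 0 := by
          apply f.map_eq_zero_of_eq _ (i := ⟨m, by omega⟩) (j := ⟨m + 1, hmn⟩)
          · rw [hm3', hm4']
            simp only [cond_false, cond_true]
            exact congrArg colA (Fin.ext rfl)
          · intro hc
            exact absurd (congrArg Fin.val hc) (by simp)
        rw [hzero, mul_zero]
    have hinj : ∀ a ∈ (Finset.univ : Finset (Fin (n+1))), ∀ b ∈ Finset.univ,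
        τ a = τ b → a = b := by
      intro a _ b _ hab
      have key : ∀ u v : Fin (n+1), (u : ℕ) < (v : ℕ) → τ u ≠ τ v := by
        intro u v huv hc
        have hun : (u : ℕ) < n := by have := v.isLt; omega
        have := congrFun hc ⟨u, hun⟩
        simp [hτdef] at this
        omega
      by_contra hne
      rcases Nat.lt_trichotomy (a : ℕ) (b : ℕ) with h | h | h
      · exact key a b h hab
      · exact hne (Fin.ext h)
      · exact key b a h hab.symm
    rw [← Finset.sum_subset (Finset.subset_univ (Finset.image τ Finset.univ)) h0,
      Finset.sum_image hinj]
  rw [himage]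
  -- Step 8 : compute the coefficient for each threshold
  have hcoeff : ∀ k : Fin (n+1), (∏ j, bif τ k j then (1 : K) else -(t j))
      = (-1 : K) ^ (n - (k : ℕ)) * z ^ (lam k - lam (Fin.last n) + (n - (k : ℕ))) := by
    intro k
    have h1 : (∏ j : Fin n, bif τ k j then (1 : K) else -(t j))
        = ∏ j ∈ Finset.univ.filter (fun j : Fin n => ¬ ((j : ℕ) < (k : ℕ))), -(t j) := by
      have hc : ∀ j : Fin n, (bif τ k j then (1 : K) else -(t j))
          = if (j : ℕ) < (k : ℕ) then (1 : K) else -(t j) := by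
        intro j
        rw [hτdef]
        exact Bool.cond_decide _ _ _
      rw [Finset.prod_congr rfl (fun j _ => hc j), Finset.prod_ite,
        Finset.prod_const_one, one_mul]
    have hL : ∀ i, (fun m => lam ⟨min m n, Nat.lt_succ_of_le (Nat.min_le_right m n)⟩) (i + 1)
        ≤ (fun m => lam ⟨min m n, Nat.lt_succ_of_le (Nat.min_le_right m n)⟩) i := by
      intro i
      apply hlam
      simp only [Fin.mk_le_mk, Fin.le_def]
      omega
    have h2 : ∏ j ∈ Finset.univ.filter (fun j : Fin n => ¬ ((j : ℕ) < (k : ℕ))), -(t j)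
        = ∏ m ∈ Finset.Ico (k : ℕ) n,
            -(z ^ ((fun m => lam ⟨min m n, Nat.lt_succ_of_le (Nat.min_le_right m n)⟩) m
              - (fun m => lam ⟨min m n, Nat.lt_succ_of_le (Nat.min_le_right m n)⟩) (m + 1) + 1)) := by
      refine Finset.prod_bij' (fun (j : Fin n) _ => (j : ℕ))
        (fun m hm => (⟨m, (Finset.mem_Ico.mp hm).2⟩ : Fin n)) ?_ ?_ ?_ ?_ ?_
      · intro a ha
        simp only [Finset.mem_filter, Finset.mem_univ, true_and, not_lt] at ha
        exact Finset.mem_Ico.mpr ⟨ha, a.isLt⟩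
      · intro a ha
        simp only [Finset.mem_filter, Finset.mem_univ, true_and, not_lt]
        exact (Finset.mem_Ico.mp ha).1
      · intro a ha
        exact Fin.ext rfl
      · intro a ha
        rfl
      · intro a ha
        show -(t a) = -(z ^ (lam ⟨min (a : ℕ) n, _⟩ - lam ⟨min ((a : ℕ) + 1) n, _⟩ + 1))
        have e1 : lam a.castSucc
            = lam ⟨min (a : ℕ) n, Nat.lt_succ_of_le (Nat.min_le_right _ _)⟩ := by
          congr 1
          exact Fin.ext (show (a : ℕ) = min (a : ℕ) n by have := a.isLt; omega)
        have e2 : lam a.succ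
            = lam ⟨min ((a : ℕ) + 1) n, Nat.lt_succ_of_le (Nat.min_le_right _ _)⟩ := by
          congr 1
          exact Fin.ext (show (a : ℕ) + 1 = min ((a : ℕ) + 1) n by have := a.isLt; omega)
        simp only [htdef]
        rw [← e1, ← e2]
    rw [h1, h2, prodt _ hL z (by have := k.isLt; omega : (k : ℕ) ≤ n)]
    have e3 : lam ⟨min (k : ℕ) n, Nat.lt_succ_of_le (Nat.min_le_right _ _)⟩ = lam k := by
      congr 1
      exact Fin.ext (show min (k : ℕ) n = (k : ℕ) by have := k.isLt; omega)
    have e4 : lam ⟨min n n, Nat.lt_succ_of_le (Nat.min_le_right _ _)⟩ = lam (Fin.last n) := by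
      congr 1
      exact Fin.ext (show min n n = n by omega)
    show _ * z ^ (lam ⟨min (k : ℕ) n, _⟩ - lam ⟨min n n, _⟩ + (n - (k : ℕ))) = _
    rw [e3, e4]
  -- Step 9 : identify the minors
  have hsel : ∀ k : Fin (n+1), (fun j => colA (bif τ k j then j.castSucc else j.succ))
      = fun j => colA (k.succAbove j) := by
    intro k
    funext j
    exact congrArg colA (tau_sel k j)
  have hsub : ∀ k : Fin (n+1), f (fun j => colA (k.succAbove j))
      = ((Matrix.of (fun i j : Fin (n+1) => x i ^ E j)).submatrix Fin.castSucc k.succAbove).det := by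
    intro k
    rw [← Matrix.det_transpose]
    rfl
  -- Step 10 : Laplace expansion of the left-hand side
  have hlhs : altdet lam x = (Matrix.of (fun i j : Fin (n+1) => x i ^ E j)).det := rfl
  rw [hlhs, Matrix.det_succ_row _ (Fin.last n), Finset.sum_mul]
  apply Finset.sum_congr rfl
  intro k _
  rw [hsel k, hsub k, hcoeff k, Fin.succAbove_last]
  have hM : (Matrix.of (fun i j : Fin (n+1) => x i ^ E j)) (Fin.last n) k = z ^ E k := by
    rw [hzdef]
    rfl
  rw [hM]
  have hsign : ((-1 : K)) ^ ((Fin.last n : ℕ) + (k : ℕ)) = (-1 : K) ^ (n - (k : ℕ)) := by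
    have hk : (k : ℕ) ≤ n := by have := k.isLt; omega
    have he : (Fin.last n : ℕ) + (k : ℕ) = (n - (k : ℕ)) + 2 * (k : ℕ) := by
      simp [Fin.last]
      omega
    rw [he, pow_add, pow_mul, neg_one_sq, one_pow, mul_one]
  rw [hsign]
  have hpow : z ^ (lam k - lam (Fin.last n) + (n - (k : ℕ))) * z ^ lam (Fin.last n)
      = z ^ E k := by
    rw [← pow_add]
    congr 1
    have := hlam (Fin.le_last k)
    simp only [hEdef]
    omega
  rw [← hpow]
  ring
end aux
-- ### combinatorial part
def TabCond {m : ℕ} (mu : Fin m → ℕ) (T : ((i : Fin m) × Fin (mu i)) → Fin m) : Prop :=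
  (∀ (i : Fin m) (j j' : Fin (mu i)), (j : ℕ) ≤ (j' : ℕ) → T ⟨i, j⟩ ≤ T ⟨i, j'⟩) ∧
  (∀ (i i' : Fin m) (j : Fin (mu i)) (j' : Fin (mu i')),
    i < i' → (j : ℕ) = (j' : ℕ) → T ⟨i, j⟩ < T ⟨i', j'⟩)

instance {m : ℕ} (mu : Fin m → ℕ) : DecidablePred (TabCond mu) := by
  intro T
  unfold TabCond
  infer_instance

lemma schur_eq {K : Type*} [CommRing K] {m : ℕ} (mu : Fin m → ℕ) (x : Fin m → K) :
    schur mu x = ∑ T ∈ Finset.univ.filter (fun T => TabCond mu T),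
      ∏ a : Fin m, x a ^ (Finset.univ.filter (fun c => T c = a)).card := by
  rw [schur]
  congr 1

lemma cell_eq {m : ℕ} {mu : Fin m → ℕ} {c c' : (i : Fin m) × Fin (mu i)}
    (h1 : c.1 = c'.1) (h2 : (c.2 : ℕ) = (c'.2 : ℕ)) : c = c' := by
  obtain ⟨I, j⟩ := c
  obtain ⟨I', j'⟩ := c'
  dsimp at h1
  subst h1
  exact congrArg _ (Fin.ext h2)

lemma tab_hcongr {n : ℕ} {ν₁ ν₂ : Fin n → ℕ} (h : ν₁ = ν₂)
    (f : ((i : Fin n) × Fin (ν₁ i)) → Fin n) (g : ((i : Fin n) × Fin (ν₂ i)) → Fin n)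
    (hfg : ∀ (i : Fin n) (jv : ℕ) (h1 : jv < ν₁ i) (h2 : jv < ν₂ i),
      f ⟨i, ⟨jv, h1⟩⟩ = g ⟨i, ⟨jv, h2⟩⟩) :
    HEq f g := by
  subst h
  apply heq_of_eq
  funext c
  obtain ⟨i, j⟩ := c
  exact hfg i j.val j.isLt j.isLt

lemma card_val_lt {m k : ℕ} (hk : k ≤ m) :
    #(Finset.univ.filter (fun j : Fin m => (j : ℕ) < k)) = k := by
  refine Eq.trans (Finset.card_bij' (fun j _ => (j : ℕ))
    (fun l hl => ⟨l, lt_of_lt_of_le (Finset.mem_range.mp hl) hk⟩) ?_ ?_ ?_ ?_) (Finset.card_range k)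
  · intro a ha
    exact Finset.mem_range.mpr (Finset.mem_filter.mp ha).2
  · intro a ha
    exact Finset.mem_filter.mpr ⟨Finset.mem_univ _, Finset.mem_range.mp ha⟩
  · intro a ha
    exact Fin.ext rfl
  · intro a ha
    rfl

section comb
variable {n : ℕ} (lam : Fin (n+1) → ℕ)

lemma row_ge {T : ((i : Fin (n+1)) × Fin (lam i)) → Fin (n+1)} (hlam : Antitone lam)
    (hT : TabCond lam T) : ∀ (i : Fin (n+1)) (j : Fin (lam i)), (i : ℕ) ≤ (T ⟨i, j⟩ : ℕ) := by
  intro i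
  induction i using Fin.induction with
  | zero => intro j; exact Nat.zero_le _
  | succ i ih =>
      intro j
      have hb : (j : ℕ) < lam i.castSucc :=
        lt_of_lt_of_le j.isLt (hlam (Fin.castSucc_le_succ i))
      have h1 := ih ⟨(j : ℕ), hb⟩
      have h2 := hT.2 i.castSucc i.succ ⟨(j : ℕ), hb⟩ j Fin.castSucc_lt_succ rfl
      rw [Fin.lt_def] at h2
      simp only [Fin.coe_castSucc, Fin.val_succ] at *
      omega

lemma last_row {T : ((i : Fin (n+1)) × Fin (lam i)) → Fin (n+1)} (hlam : Antitone lam)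
    (hT : TabCond lam T) (j : Fin (lam (Fin.last n))) : T ⟨Fin.last n, j⟩ = Fin.last n := by
  have h1 := row_ge lam hlam hT (Fin.last n) j
  have h2 := Fin.le_last (T ⟨Fin.last n, j⟩)
  rw [Fin.le_def] at h2
  apply Fin.ext
  simp only [Fin.val_last] at *
  omega

/-- number of entries `< n` in row `i.castSucc`. -/
def nuOf (T : ((i : Fin (n+1)) × Fin (lam i)) → Fin (n+1)) (i : Fin n) : ℕ :=
  #(Finset.univ.filter (fun j : Fin (lam i.castSucc) => (T ⟨i.castSucc, j⟩ : ℕ) < n))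

lemma nuOf_le (T : ((i : Fin (n+1)) × Fin (lam i)) → Fin (n+1)) (i : Fin n) :
    nuOf lam T i ≤ lam i.castSucc := by
  rw [nuOf]
  exact le_trans (Finset.card_filter_le _ _) (by simp)

lemma nuOf_prefix {T : ((i : Fin (n+1)) × Fin (lam i)) → Fin (n+1)}
    (hT : TabCond lam T) (i : Fin n) (j : Fin (lam i.castSucc)) :
    (j : ℕ) < nuOf lam T i ↔ (T ⟨i.castSucc, j⟩ : ℕ) < n := by
  rw [nuOf]
  have hdc : ∀ j j' : Fin (lam i.castSucc), j ≤ j' →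
      j' ∈ Finset.univ.filter (fun j : Fin (lam i.castSucc) => (T ⟨i.castSucc, j⟩ : ℕ) < n) →
      j ∈ Finset.univ.filter (fun j : Fin (lam i.castSucc) => (T ⟨i.castSucc, j⟩ : ℕ) < n) := by
    intro j j' hle hj'
    rw [Finset.mem_filter] at hj' ⊢
    refine ⟨Finset.mem_univ _, ?_⟩
    have := hT.1 i.castSucc j j' hle
    rw [Fin.le_def] at this
    omega
  have := (lower_card _ hdc j).symm
  rw [this, Finset.mem_filter]
  simp

end comb
section comb2
variable {n : ℕ} (lam : Fin (n+1) → ℕ)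

/-- restrict a tableau to its entries `< n`. -/
def resT (T : ((i : Fin (n+1)) × Fin (lam i)) → Fin (n+1)) (hT : TabCond lam T) :
    ((i : Fin n) × Fin (nuOf lam T i)) → Fin n := fun c =>
  Fin.castLT (T ⟨Fin.castSucc c.1, ⟨(c.2 : ℕ), lt_of_lt_of_le c.2.isLt (nuOf_le lam T c.1)⟩⟩)
    ((nuOf_prefix lam hT c.1 ⟨(c.2 : ℕ), lt_of_lt_of_le c.2.isLt (nuOf_le lam T c.1)⟩).mp c.2.isLt)

/-- extend a tableau by filling with the maximal entry. -/
def extT (ν : Fin n → ℕ) (T' : ((i : Fin n) × Fin (ν i)) → Fin n) :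
    ((i : Fin (n+1)) × Fin (lam i)) → Fin (n+1) := fun c =>
  if h1 : (c.1 : ℕ) < n then
    if h2 : (c.2 : ℕ) < ν ⟨(c.1 : ℕ), h1⟩ then
      Fin.castSucc (T' ⟨⟨(c.1 : ℕ), h1⟩, ⟨(c.2 : ℕ), h2⟩⟩)
    else Fin.last n
  else Fin.last n

lemma res_cond {T : ((i : Fin (n+1)) × Fin (lam i)) → Fin (n+1)} (hT : TabCond lam T) :
    TabCond (nuOf lam T) (resT lam T hT) := by
  constructor
  · intro i j j' hle
    rw [Fin.le_def]
    have h := hT.1 i.castSucc ⟨(j : ℕ), lt_of_lt_of_le j.isLt (nuOf_le lam T i)⟩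
      ⟨(j' : ℕ), lt_of_lt_of_le j'.isLt (nuOf_le lam T i)⟩ hle
    rw [Fin.le_def] at h
    exact h
  · intro i i' j j' hii' hjj'
    rw [Fin.lt_def]
    have h := hT.2 i.castSucc i'.castSucc
      ⟨(j : ℕ), lt_of_lt_of_le j.isLt (nuOf_le lam T i)⟩
      ⟨(j' : ℕ), lt_of_lt_of_le j'.isLt (nuOf_le lam T i')⟩
      (Fin.castSucc_lt_castSucc_iff.mpr hii') hjj'
    rw [Fin.lt_def] at h
    exact h

lemma nu_mem {T : ((i : Fin (n+1)) × Fin (lam i)) → Fin (n+1)} (hlam : Antitone lam)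
    (hT : TabCond lam T) :
    nuOf lam T ∈ Fintype.piFinset (fun i : Fin n => Finset.Icc (lam i.succ) (lam i.castSucc)) := by
  rw [Fintype.mem_piFinset]
  intro i
  rw [Finset.mem_Icc]
  refine ⟨?_, nuOf_le lam T i⟩
  -- lower bound : lam i.succ ≤ nuOf lam T i
  have : (Finset.univ : Finset (Fin (lam i.succ))).card ≤
      #(Finset.univ.filter (fun j : Fin (lam i.castSucc) => (T ⟨i.castSucc, j⟩ : ℕ) < n)) := by
    apply Finset.card_le_card_of_injOn
      (fun j => ⟨(j : ℕ), lt_of_lt_of_le j.isLt (hlam (Fin.castSucc_le_succ i))⟩)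
    · intro j _
      rw [Finset.mem_coe, Finset.mem_filter]; beta_reduce
      refine ⟨Finset.mem_univ _, ?_⟩
      have h2 := hT.2 i.castSucc i.succ
        ⟨(j : ℕ), lt_of_lt_of_le j.isLt (hlam (Fin.castSucc_le_succ i))⟩ j
        Fin.castSucc_lt_succ rfl
      rw [Fin.lt_def] at h2
      have h3 : (T ⟨i.succ, j⟩ : ℕ) ≤ n := by
        have := Fin.le_last (T ⟨i.succ, j⟩)
        rw [Fin.le_def] at this
        simpa using this
      omega
    · intro a _ b _ hab
      simpa [Fin.ext_iff] using hab
  simpa [nuOf] using this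

lemma ext_cond (hlam : Antitone lam) {ν : Fin n → ℕ}
    (hν : ∀ i : Fin n, lam i.succ ≤ ν i ∧ ν i ≤ lam i.castSucc)
    {T' : ((i : Fin n) × Fin (ν i)) → Fin n} (hT' : TabCond ν T') :
    TabCond lam (extT lam ν T') := by
  have keylt : ∀ (I I' : Fin (n+1)) (hI : (I : ℕ) < n), I < I' → ∀ (jv : ℕ), jv < lam I' →
      jv < ν ⟨(I : ℕ), hI⟩ := by
    intro I I' hI hII' jv hjv
    have h1 : lam I' ≤ lam ((⟨(I : ℕ), hI⟩ : Fin n)).succ := by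
      apply hlam
      rw [Fin.le_def]
      simpa using hII'
    have h2 := (hν ⟨(I : ℕ), hI⟩).1
    omega
  constructor
  · intro i j j' hle
    simp only [extT]
    by_cases h1 : (i : ℕ) < n
    · simp only [dif_pos h1]
      by_cases h2 : (j : ℕ) < ν ⟨(i : ℕ), h1⟩
      · have h2' : (j' : ℕ) < ν ⟨(i : ℕ), h1⟩ ∨ ¬ ((j' : ℕ) < ν ⟨(i : ℕ), h1⟩) := em _
        rcases h2' with h2' | h2'
        · simp only [dif_pos h2, dif_pos h2']
          rw [Fin.le_def]
          have := hT'.1 ⟨(i : ℕ), h1⟩ ⟨(j : ℕ), h2⟩ ⟨(j' : ℕ), h2'⟩ hle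
          rw [Fin.le_def] at this
          simpa using this
        · simp only [dif_pos h2, dif_neg h2']
          exact Fin.le_last _
      · have h2' : ¬ ((j' : ℕ) < ν ⟨(i : ℕ), h1⟩) := by omega
        simp only [dif_neg h2, dif_neg h2']
        exact le_refl _
    · simp only [dif_neg h1]
      exact le_refl _
  · intro i i' j j' hii' hjj'
    simp only [extT]
    have hi : (i : ℕ) < n := by
      have h1 : (i : ℕ) < (i' : ℕ) := hii'
      have h2 : (i' : ℕ) < n + 1 := i'.isLt
      omega
    simp only [dif_pos hi]
    have hjν : (j : ℕ) < ν ⟨(i : ℕ), hi⟩ := by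
      have := keylt i i' hi hii' (j' : ℕ) j'.isLt
      omega
    simp only [dif_pos hjν]
    by_cases h1' : (i' : ℕ) < n
    · simp only [dif_pos h1']
      by_cases h2' : (j' : ℕ) < ν ⟨(i' : ℕ), h1'⟩
      · simp only [dif_pos h2']
        rw [Fin.castSucc_lt_castSucc_iff]
        exact hT'.2 ⟨(i : ℕ), hi⟩ ⟨(i' : ℕ), h1'⟩ ⟨(j : ℕ), hjν⟩ ⟨(j' : ℕ), h2'⟩ hii' hjj'
      · simp only [dif_neg h2']
        exact Fin.castSucc_lt_last _
    · simp only [dif_neg h1']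
      exact Fin.castSucc_lt_last _

end comb2
section comb3
variable {n : ℕ} (lam : Fin (n+1) → ℕ)

lemma extT_eval_lt {ν : Fin n → ℕ} {T' : ((i : Fin n) × Fin (ν i)) → Fin n}
    (c : (i : Fin (n+1)) × Fin (lam i)) (h1 : (c.1 : ℕ) < n)
    (h2 : (c.2 : ℕ) < ν ⟨(c.1 : ℕ), h1⟩) :
    extT lam ν T' c = Fin.castSucc (T' ⟨⟨(c.1 : ℕ), h1⟩, ⟨(c.2 : ℕ), h2⟩⟩) := by
  simp only [extT]
  rw [dif_pos h1, dif_pos h2]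

lemma extT_eval_ge {ν : Fin n → ℕ} {T' : ((i : Fin n) × Fin (ν i)) → Fin n}
    (c : (i : Fin (n+1)) × Fin (lam i)) (h1 : (c.1 : ℕ) < n)
    (h2 : ¬ ((c.2 : ℕ) < ν ⟨(c.1 : ℕ), h1⟩)) :
    extT lam ν T' c = Fin.last n := by
  simp only [extT]
  rw [dif_pos h1, dif_neg h2]

lemma extT_eval_out {ν : Fin n → ℕ} {T' : ((i : Fin n) × Fin (ν i)) → Fin n}
    (c : (i : Fin (n+1)) × Fin (lam i)) (h1 : ¬ ((c.1 : ℕ) < n)) :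
    extT lam ν T' c = Fin.last n := by
  simp only [extT]
  rw [dif_neg h1]

lemma ext_res {T : ((i : Fin (n+1)) × Fin (lam i)) → Fin (n+1)} (hlam : Antitone lam)
    (hT : TabCond lam T) : extT lam (nuOf lam T) (resT lam T hT) = T := by
  funext c
  obtain ⟨I, j⟩ := c
  by_cases h1 : (I : ℕ) < n
  · by_cases h2 : (j : ℕ) < nuOf lam T ⟨(I : ℕ), h1⟩
    · rw [extT_eval_lt lam ⟨I, j⟩ h1 h2]
      have hval : Fin.castSucc (resT lam T hT ⟨⟨(I : ℕ), h1⟩, ⟨(j : ℕ), h2⟩⟩)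
          = T ⟨Fin.castSucc ⟨(I : ℕ), h1⟩,
              ⟨(j : ℕ), lt_of_lt_of_le h2 (nuOf_le lam T ⟨(I : ℕ), h1⟩)⟩⟩ := Fin.ext rfl
      rw [hval]
      exact congrArg T (cell_eq (Fin.ext rfl) rfl)
    · rw [extT_eval_ge lam ⟨I, j⟩ h1 h2]
      have hb : (j : ℕ) < lam (Fin.castSucc ⟨(I : ℕ), h1⟩) := by
        rw [show Fin.castSucc ⟨(I : ℕ), h1⟩ = I from Fin.ext rfl]
        exact j.isLt
      have hpre := nuOf_prefix lam hT ⟨(I : ℕ), h1⟩ ⟨(j : ℕ), hb⟩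
      rw [congrArg T (cell_eq (Fin.ext rfl) rfl : (⟨Fin.castSucc ⟨(I : ℕ), h1⟩, ⟨(j : ℕ), hb⟩⟩ :
        (i : Fin (n+1)) × Fin (lam i)) = ⟨I, j⟩)] at hpre
      have h3 : ¬ ((T ⟨I, j⟩ : ℕ) < n) := fun hc => h2 (hpre.mpr hc)
      have hle := Fin.le_last (T ⟨I, j⟩)
      rw [Fin.le_def] at hle
      apply Fin.ext
      simp only [Fin.val_last] at *
      omega
  · rw [extT_eval_out lam ⟨I, j⟩ h1]
    have hI : I = Fin.last n := Fin.ext (by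
      have := I.isLt
      simp only [Fin.val_last]
      omega)
    have hb : (j : ℕ) < lam (Fin.last n) := by rw [← hI]; exact j.isLt
    rw [← last_row lam hlam hT ⟨(j : ℕ), hb⟩]
    exact congrArg T (cell_eq (c := ⟨Fin.last n, ⟨(j : ℕ), hb⟩⟩) (c' := ⟨I, j⟩) hI.symm rfl)

lemma nu_ext {ν : Fin n → ℕ} {T' : ((i : Fin n) × Fin (ν i)) → Fin n}
    (hub : ∀ i : Fin n, ν i ≤ lam i.castSucc) :
    nuOf lam (extT lam ν T') = ν := by
  funext i
  rw [nuOf]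
  have h1 : ((i.castSucc : Fin (n+1)) : ℕ) < n := by simp
  have hflt : ∀ j : Fin (lam i.castSucc),
      ((extT lam ν T' ⟨i.castSucc, j⟩ : Fin (n+1)) : ℕ) < n ↔ (j : ℕ) < ν i := by
    intro j
    by_cases h2 : (j : ℕ) < ν ⟨((i.castSucc : Fin (n+1)) : ℕ), h1⟩
    · rw [extT_eval_lt lam ⟨i.castSucc, j⟩ h1 h2]
      simp only [Fin.coe_castSucc]
      exact ⟨fun _ => h2, fun _ => Fin.isLt _⟩
    · rw [extT_eval_ge lam ⟨i.castSucc, j⟩ h1 h2]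
      simp only [Fin.val_last]
      exact ⟨fun hc => absurd hc (lt_irrefl n), fun hc => absurd hc h2⟩
  rw [Finset.filter_congr (fun j _ => hflt j)]
  exact card_val_lt (hub i)

lemma res_ext {ν : Fin n → ℕ} {T' : ((i : Fin n) × Fin (ν i)) → Fin n}
    (hub : ∀ i : Fin n, ν i ≤ lam i.castSucc) (hext : TabCond lam (extT lam ν T')) :
    HEq (resT lam (extT lam ν T') hext) T' := by
  apply tab_hcongr (nu_ext lam hub)
  intro i jv h1 h2
  apply Fin.ext
  show ((extT lam ν T' ⟨Fin.castSucc i, ⟨jv, _⟩⟩ : Fin (n+1)) : ℕ) = _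
  rw [extT_eval_lt lam ⟨Fin.castSucc i, ⟨jv, _⟩⟩
    (by simp : ((Fin.castSucc i : Fin (n+1)) : ℕ) < n) h2]
  rfl

end comb3
section comb4
variable {n : ℕ} (lam : Fin (n+1) → ℕ)

lemma count_res {T : ((i : Fin (n+1)) × Fin (lam i)) → Fin (n+1)} (hlam : Antitone lam)
    (hT : TabCond lam T) (a : Fin n) :
    #(Finset.univ.filter (fun c : (i : Fin (n+1)) × Fin (lam i) => T c = Fin.castSucc a))
      = #(Finset.univ.filter
          (fun c' : (i : Fin n) × Fin (nuOf lam T i) => resT lam T hT c' = a)) := by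
  have hIfun : ∀ c : (i : Fin (n+1)) × Fin (lam i), T c = Fin.castSucc a → (c.1 : ℕ) < n := by
    rintro ⟨I, j⟩ hc
    show (I : ℕ) < n
    have h1 := row_ge lam hlam hT I j
    have h2 : (T ⟨I, j⟩ : ℕ) = (a : ℕ) := by rw [hc]; simp
    have h3 := a.isLt
    omega
  have hJfun : ∀ (c : (i : Fin (n+1)) × Fin (lam i)) (hc : T c = Fin.castSucc a)
      (hI : (c.1 : ℕ) < n), (c.2 : ℕ) < nuOf lam T ⟨(c.1 : ℕ), hI⟩ := by
    rintro ⟨I, j⟩ hc hI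
    have hb : (j : ℕ) < lam (Fin.castSucc ⟨(I : ℕ), hI⟩) := by
      rw [show Fin.castSucc ⟨(I : ℕ), hI⟩ = I from Fin.ext rfl]
      exact j.isLt
    apply (nuOf_prefix lam hT ⟨(I : ℕ), hI⟩ ⟨(j : ℕ), hb⟩).mpr
    rw [congrArg T (cell_eq (c := ⟨Fin.castSucc ⟨(I : ℕ), hI⟩, ⟨(j : ℕ), hb⟩⟩)
      (c' := ⟨I, j⟩) (Fin.ext rfl) rfl), hc]
    simpa using a.isLt
  refine Finset.card_bij'
    (fun c hc => ⟨⟨(c.1 : ℕ), hIfun c (Finset.mem_filter.mp hc).2⟩,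
      ⟨(c.2 : ℕ), hJfun c (Finset.mem_filter.mp hc).2 (hIfun c (Finset.mem_filter.mp hc).2)⟩⟩)
    (fun c' _ => ⟨Fin.castSucc c'.1,
      ⟨(c'.2 : ℕ), lt_of_lt_of_le c'.2.isLt (nuOf_le lam T c'.1)⟩⟩) ?_ ?_ ?_ ?_
  · intro c hc
    rw [Finset.mem_filter]
    refine ⟨Finset.mem_univ _, ?_⟩
    apply Fin.ext
    have hc' := (Finset.mem_filter.mp hc).2
    show (T ⟨Fin.castSucc ⟨(c.1 : ℕ), _⟩, ⟨(c.2 : ℕ), _⟩⟩ : ℕ) = (a : ℕ)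
    have h5 : (T c : ℕ) = (a : ℕ) := by rw [hc']; simp
    exact (congrArg Fin.val (congrArg T (cell_eq (c' := c) (Fin.ext rfl) rfl))).trans h5
  · intro c' hc'
    rw [Finset.mem_filter]
    refine ⟨Finset.mem_univ _, ?_⟩
    have h2 := (Finset.mem_filter.mp hc').2
    apply Fin.ext
    have h3 : ((resT lam T hT c' : Fin n) : ℕ) = (a : ℕ) := congrArg Fin.val h2
    show (T ⟨Fin.castSucc c'.1, ⟨(c'.2 : ℕ), _⟩⟩ : ℕ) = ((Fin.castSucc a : Fin (n+1)) : ℕ)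
    rw [Fin.coe_castSucc]
    exact h3
  · intro c hc
    exact cell_eq (Fin.ext rfl) rfl
  · intro c' hc'
    exact cell_eq (Fin.ext rfl) rfl

lemma count_last {T : ((i : Fin (n+1)) × Fin (lam i)) → Fin (n+1)} (hlam : Antitone lam)
    (hT : TabCond lam T) :
    #(Finset.univ.filter (fun c : (i : Fin (n+1)) × Fin (lam i) => T c = Fin.last n))
      = (∑ i, lam i) - ∑ i, nuOf lam T i := by
  have htot : (∑ a : Fin (n+1),
      #(Finset.univ.filter (fun c : (i : Fin (n+1)) × Fin (lam i) => T c = a)))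
      = ∑ i, lam i := by
    have h := (Finset.card_eq_sum_card_fiberwise
      (f := T) (s := Finset.univ) (t := Finset.univ) (fun c _ => Finset.mem_univ _)).symm
    rw [h, Finset.card_univ]
    simp [Fintype.card_sigma]
  have hres : (∑ a : Fin n,
      #(Finset.univ.filter (fun c' : (i : Fin n) × Fin (nuOf lam T i) => resT lam T hT c' = a)))
      = ∑ i, nuOf lam T i := by
    have h := (Finset.card_eq_sum_card_fiberwise
      (f := resT lam T hT) (s := Finset.univ) (t := Finset.univ) (fun c _ => Finset.mem_univ _)).symm
    rw [h, Finset.card_univ]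
    simp [Fintype.card_sigma]
  rw [Fin.sum_univ_castSucc] at htot
  rw [Finset.sum_congr rfl (fun a _ => count_res lam hlam hT a), hres] at htot
  have hle : (∑ i, nuOf lam T i) ≤ ∑ i, lam i := by omega
  omega

lemma weight_eq {K : Type*} [CommRing K] {T : ((i : Fin (n+1)) × Fin (lam i)) → Fin (n+1)}
    (hlam : Antitone lam) (hT : TabCond lam T) (x : Fin (n+1) → K) :
    (∏ a : Fin (n+1), x a ^ #(Finset.univ.filter (fun c => T c = a)))
      = x (Fin.last n) ^ ((∑ i, lam i) - ∑ i, nuOf lam T i) *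
        ∏ a : Fin n, (x ∘ Fin.castSucc) a ^
          #(Finset.univ.filter (fun c' => resT lam T hT c' = a)) := by
  rw [Fin.prod_univ_castSucc, count_last lam hlam hT]
  rw [Finset.prod_congr rfl (fun a _ => by rw [count_res lam hlam hT a]; rfl : ∀ a ∈ Finset.univ,
    x (Fin.castSucc a) ^ #(Finset.univ.filter (fun c => T c = Fin.castSucc a))
      = (x ∘ Fin.castSucc) a ^ #(Finset.univ.filter (fun c' => resT lam T hT c' = a)))]
  exact mul_comm _ _

end comb4
lemma nu_antitone {n : ℕ} {lam : Fin (n+1) → ℕ} (hlam : Antitone lam) {ν : Fin n → ℕ}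
    (hν : ∀ i : Fin n, lam i.succ ≤ ν i ∧ ν i ≤ lam i.castSucc) : Antitone ν := by
  intro a b hab
  rcases eq_or_lt_of_le hab with rfl | h
  · exact le_refl _
  · have h1 := (hν b).2
    have h2 := (hν a).1
    have h3 : lam b.castSucc ≤ lam a.succ := by
      apply hlam
      rw [Fin.le_def]
      simp only [Fin.val_succ, Fin.coe_castSucc]
      exact h
    omega

lemma schur_branch {K : Type*} [CommRing K] {n : ℕ} (lam : Fin (n+1) → ℕ)
    (hlam : Antitone lam) (x : Fin (n+1) → K) :
    schur lam x
      = ∑ ν ∈ Fintype.piFinset (fun i : Fin n => Finset.Icc (lam i.succ) (lam i.castSucc)),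
          x (Fin.last n) ^ ((∑ i, lam i) - ∑ i, ν i) * schur ν (x ∘ Fin.castSucc) := by
  classical
  rw [schur_eq]
  rw [Finset.sum_congr rfl (fun ν _ => by rw [schur_eq, Finset.mul_sum] :
    ∀ ν ∈ Fintype.piFinset (fun i : Fin n => Finset.Icc (lam i.succ) (lam i.castSucc)),
      x (Fin.last n) ^ ((∑ i, lam i) - ∑ i, ν i) * schur ν (x ∘ Fin.castSucc)
        = ∑ T' ∈ Finset.univ.filter (fun T' => TabCond ν T'),
            x (Fin.last n) ^ ((∑ i, lam i) - ∑ i, ν i) *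
              ∏ a : Fin n, (x ∘ Fin.castSucc) a ^
                #(Finset.univ.filter (fun c => T' c = a)))]
  rw [Finset.sum_sigma']
  refine Finset.sum_bij'
    (fun T hT => (⟨nuOf lam T, resT lam T (Finset.mem_filter.mp hT).2⟩ :
      (ν : Fin n → ℕ) × (((i : Fin n) × Fin (ν i)) → Fin n)))
    (fun p _ => extT lam p.1 p.2) ?_ ?_ ?_ ?_ ?_
  · intro T hT
    have hT' := (Finset.mem_filter.mp hT).2
    exact Finset.mem_sigma.mpr ⟨nu_mem lam hlam hT',
      Finset.mem_filter.mpr ⟨Finset.mem_univ _, res_cond lam hT'⟩⟩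
  · intro p hp
    have hp' := Finset.mem_sigma.mp hp
    have hb : ∀ i : Fin n, lam i.succ ≤ p.1 i ∧ p.1 i ≤ lam i.castSucc := by
      intro i
      have := Fintype.mem_piFinset.mp hp'.1 i
      rw [Finset.mem_Icc] at this
      exact this
    exact Finset.mem_filter.mpr ⟨Finset.mem_univ _,
      ext_cond lam hlam hb (Finset.mem_filter.mp hp'.2).2⟩
  · intro T hT
    exact ext_res lam hlam (Finset.mem_filter.mp hT).2
  · intro p hp
    obtain ⟨ν, T'⟩ := p
    have hp' := Finset.mem_sigma.mp hp
    have hbfull : ∀ i : Fin n, lam i.succ ≤ ν i ∧ ν i ≤ lam i.castSucc := by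
      intro i
      have := Fintype.mem_piFinset.mp hp'.1 i
      rw [Finset.mem_Icc] at this
      exact this
    have hub : ∀ i : Fin n, ν i ≤ lam i.castSucc := fun i => (hbfull i).2
    have hT'c : TabCond ν T' := (Finset.mem_filter.mp hp'.2).2
    exact Sigma.ext (nu_ext lam hub) (res_ext lam hub (ext_cond lam hlam hbfull hT'c))
  · intro T hT
    exact weight_eq lam hlam (Finset.mem_filter.mp hT).2 x

theorem schur_key {K : Type*} [CommRing K] : ∀ {m : ℕ} (lam : Fin m → ℕ), Antitone lam →
    ∀ x : Fin m → K, schur lam x * vprod x = altdet lam x := by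
  intro m
  induction m with
  | zero =>
      intro lam _ x
      have h1 : schur lam x = 1 := by
        rw [schur]
        rw [show (Finset.univ.filter (fun T : ((i : Fin 0) × Fin (lam i)) → Fin 0 =>
            (∀ (i : Fin 0) (j j' : Fin (lam i)), (j : ℕ) ≤ (j' : ℕ) → T ⟨i, j⟩ ≤ T ⟨i, j'⟩) ∧
            (∀ (i i' : Fin 0) (j : Fin (lam i)) (j' : Fin (lam i')),
              i < i' → (j : ℕ) = (j' : ℕ) → T ⟨i, j⟩ < T ⟨i', j'⟩))) = Finset.univ from
          Finset.filter_true_of_mem (fun T _ => ⟨fun i => i.elim0, fun i => i.elim0⟩)]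
        simp
      have h2 : vprod x = 1 := by
        rw [vprod]
        rw [show (Finset.univ.filter (fun p : Fin 0 × Fin 0 => p.1 < p.2)) = ∅ from
          Finset.eq_empty_of_forall_notMem (fun p _ => p.1.elim0)]
        simp
      rw [h1, h2, altdet, one_mul]; exact Matrix.det_fin_zero.symm
  | succ m ih =>
      intro lam hlam x
      rw [schur_branch lam hlam x, vprod_succ x, alt_branch lam hlam x]
      rw [Finset.sum_mul, Finset.mul_sum]
      apply Finset.sum_congr rfl
      intro ν hν
      have hb : ∀ i : Fin m, lam i.succ ≤ ν i ∧ ν i ≤ lam i.castSucc := by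
        intro i
        have := Fintype.mem_piFinset.mp hν i
        rw [Finset.mem_Icc] at this
        exact this
      rw [← ih ν (nu_antitone hlam hb) (x ∘ Fin.castSucc)]
      ring

/-- The bialternant formula for the Schur polynomial:
`s_λ(x₁,...,xₙ) = det(xᵢ^{λⱼ+n-j}) / ∏_{i<j} (xᵢ - xⱼ)`
(with `j` 0-indexed, so the exponent is `λⱼ + (n-1-j)`), the `xᵢ` being distinct. -/
theorem stmt18 {K : Type*} [Field K] {n : ℕ} (lam : Fin n → ℕ) (hlam : Antitone lam)
    (x : Fin n → K) (hinj : Function.Injective x) :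
    schur lam x =
      Matrix.det (fun i j : Fin n => x i ^ (lam j + (n - 1 - (j : ℕ)))) /
        ∏ p ∈ Finset.univ.filter (fun p : Fin n × Fin n => p.1 < p.2),
          (x p.1 - x p.2) := by
  have hV : (∏ p ∈ Finset.univ.filter (fun p : Fin n × Fin n => p.1 < p.2),
      (x p.1 - x p.2)) ≠ 0 := by
    rw [Finset.prod_ne_zero_iff]
    intro p hp
    rw [Finset.mem_filter] at hp
    exact sub_ne_zero_of_ne (fun hc => absurd (hinj hc) (ne_of_lt hp.2))
  rw [eq_div_iff hV]
  exact schur_key lam hlam x
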